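/- If a trace τ is well formed (at most one lin(o) action per operation identifier o, and no lin(o) or vis(o, o') action occurs before the call action for o), then the linearization relation of the abstract execution f_e(e_∅, τ) is a strict total order on the set of operation identifiers o for which lin(o) occurs in τ, and the order agrees with the order of occurrence of the lin actions in τ. -/

import Mathlib

/-- Abstract-execution actions over operation identifiers in ℕ; `tau` stands for
any non-abstract-execution action. -/
inductive Act where
  | call : ℕ → String → ℕ → Act
  | ret : ℕ → ℕ → Act
  | hb : ℕ → ℕ → Act
  | lin : ℕ → Act
  | vis : ℕ → ℕ → Act
  | tau : Act
deriving DecidableEq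

/-- An abstract execution: a history, a linearization (sequence of operations,
representing the linearization order), and a visibility relation. -/
structure Exec (H : Type*) where
  hist : H
  lin : List ℕ
  vis : Set (ℕ × ℕ)

/-- One-action update `g_e`, parameterized by the history update `gh`. -/
def ge {H : Type*} (gh : H → Act → H) (e : Exec H) : Act → Exec H
  | Act.call o m x => { e with hist := gh e.hist (Act.call o m x) }
  | Act.ret o y => { e with hist := gh e.hist (Act.ret o y) }
  | Act.hb o o' => { e with hist := gh e.hist (Act.hb o o') }
  | Act.lin o => { e with lin := e.lin ++ [o] }
  | Act.vis o o' => { e with vis := e.vis ∪ {(o, o')} }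
  | Act.tau => e

/-- The inductively-defined `f_e`: apply abstract-execution actions in order,
skipping non-abstract-execution actions. -/
def fe {H : Type*} (gh : H → Act → H) : Exec H → List Act → Exec H
  | e, [] => e
  | e, a :: τ => fe gh (if a = Act.tau then e else ge gh e a) τ

/-- The empty execution. -/
def e0 {H : Type*} (h0 : H) : Exec H := ⟨h0, [], ∅⟩


/-- The linearization relation derived from an abstract execution: `o` is linearized
strictly before `o'`. -/
def linRel {H : Type*} (e : Exec H) (o o' : ℕ) : Prop :=
  ∃ i j : ℕ, i < j ∧ e.lin[i]? = some o ∧ e.lin[j]? = some o'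

/-- A trace is well formed: at most one `lin o` action per operation `o`, and every
`lin o` or `vis o _` action is preceded by a `call o _ _` action. -/
def wf (τ : List Act) : Prop :=
  (∀ o, τ.count (Act.lin o) ≤ 1) ∧
  (∀ (i : ℕ) o, (τ[i]? = some (Act.lin o) ∨ ∃ o', τ[i]? = some (Act.vis o o')) →
    ∃ j, j < i ∧ ∃ m x, τ[j]? = some (Act.call o m x))


open List

/-- Extract the operation of a `lin` action. -/
def pick : Act → Option ℕ
  | Act.lin o => some o
  | _ => none

lemma fe_lin {H : Type*} (gh : H → Act → H) :
    ∀ (τ : List Act) (e : Exec H), (fe gh e τ).lin = e.lin ++ τ.filterMap pick := by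
  intro τ
  induction τ with
  | nil => intro e; simp [fe]
  | cons a τ ih =>
    intro e
    cases a <;> simp [fe, ge, pick, ih, List.filterMap_cons]

lemma pair_sublist_iff {α : Type*} (a b : α) :
    ∀ (l : List α),
      (∃ i j : ℕ, i < j ∧ l[i]? = some a ∧ l[j]? = some b) ↔ [a, b] <+ l := by
  intro l
  constructor
  · rintro ⟨i, j, hij, ha, hb⟩
    induction l generalizing i j with
    | nil => simp at ha
    | cons x l ih =>
      cases i with
      | zero =>
        simp at ha; subst ha
        obtain ⟨k, rfl⟩ := Nat.exists_eq_add_of_lt hij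
        simp only [List.getElem?_cons_succ] at hb
        have hmem : b ∈ l := List.mem_of_getElem? hb
        exact List.cons_sublist_cons.mpr (List.singleton_sublist.mpr hmem)
      | succ i =>
        cases j with
        | zero => omega
        | succ j =>
          simp only [List.getElem?_cons_succ] at ha hb
          exact (ih i j (by omega) ha hb).cons x
  · intro h
    induction l with
    | nil => simp at h
    | cons x l ih =>
      cases h with
      | cons _ h =>
        obtain ⟨i, j, hij, ha, hb⟩ := ih h
        exact ⟨i + 1, j + 1, by omega, by simpa using ha, by simpa using hb⟩
      | cons_cons _ h =>
        obtain ⟨k, hk⟩ := List.mem_iff_getElem?.mp (List.singleton_sublist.mp h)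
        exact ⟨0, k + 1, by omega, rfl, by simpa using hk⟩

lemma sublist_filterMap_pick (a b : ℕ) :
    ∀ (τ : List Act), [a, b] <+ τ.filterMap pick ↔ [Act.lin a, Act.lin b] <+ τ := by
  intro τ
  constructor
  · intro h
    induction τ with
    | nil => simp [List.filterMap] at h
    | cons x τ ih =>
      cases x with
      | lin o =>
        simp only [List.filterMap_cons, pick] at h
        cases h with
        | cons _ h => exact (ih h).cons _
        | cons_cons _ h =>
          have hb : Act.lin b ∈ τ := by
            have : b ∈ τ.filterMap pick := List.singleton_sublist.mp h
            obtain ⟨c, hc, hpc⟩ := List.mem_filterMap.mp this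
            cases c <;> simp [pick] at hpc
            subst hpc; exact hc
          exact List.cons_sublist_cons.mpr (List.singleton_sublist.mpr hb)
      | call o m x => simp only [List.filterMap_cons, pick] at h; exact (ih h).cons _
      | ret o y => simp only [List.filterMap_cons, pick] at h; exact (ih h).cons _
      | hb o o' => simp only [List.filterMap_cons, pick] at h; exact (ih h).cons _
      | vis o o' => simp only [List.filterMap_cons, pick] at h; exact (ih h).cons _
      | tau => simp only [List.filterMap_cons, pick] at h; exact (ih h).cons _
  · intro h
    have := h.filterMap pick
    simpa [List.filterMap_cons, pick] using this

/-- For a well-formed trace, the linearization relation of `f_e(e_∅, τ)` is a strict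
total order on the operations with a `lin` action in `τ`, agreeing with the order of
occurrence of the `lin` actions. -/
theorem lin_strict_total_order {H : Type*} (gh : H → Act → H) (h0 : H)
    (τ : List Act) (hwf : wf τ) :
    (∀ o, Act.lin o ∈ τ → ¬ linRel (fe gh (e0 h0) τ) o o) ∧
    (∀ o1 o2 o3, linRel (fe gh (e0 h0) τ) o1 o2 → linRel (fe gh (e0 h0) τ) o2 o3 →
      linRel (fe gh (e0 h0) τ) o1 o3) ∧
    (∀ o, Act.lin o ∈ τ → ∀ o', Act.lin o' ∈ τ → o ≠ o' →
      linRel (fe gh (e0 h0) τ) o o' ∨ linRel (fe gh (e0 h0) τ) o' o) ∧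
    (∀ o o', linRel (fe gh (e0 h0) τ) o o' ↔
      ∃ i j : ℕ, i < j ∧ τ[i]? = some (Act.lin o) ∧ τ[j]? = some (Act.lin o')) := by

  obtain ⟨hcount, _⟩ := hwf
  have hlin : (fe gh (e0 h0) τ).lin = τ.filterMap pick := by
    simp [fe_lin, e0]
  have key : ∀ o o', linRel (fe gh (e0 h0) τ) o o' ↔
      ∃ i j : ℕ, i < j ∧ τ[i]? = some (Act.lin o) ∧ τ[j]? = some (Act.lin o') := by
    intro o o'
    unfold linRel
    rw [hlin, pair_sublist_iff, sublist_filterMap_pick, ← pair_sublist_iff]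
  have hdup : ∀ o, ¬ [Act.lin o, Act.lin o] <+ τ := by
    intro o h
    have h2 : 2 ≤ τ.count (Act.lin o) :=
      List.duplicate_iff_two_le_count.mp (List.duplicate_iff_sublist.mpr h)
    have := hcount o
    omega
  refine ⟨?_, ?_, ?_, key⟩
  · intro o _ h
    obtain ⟨i, j, hij, ha, hb⟩ := (key o o).mp h
    exact hdup o ((pair_sublist_iff _ _ τ).mp ⟨i, j, hij, ha, hb⟩)
  · intro o1 o2 o3 h12 h23
    obtain ⟨i, j, hij, h1, h2⟩ := (key o1 o2).mp h12
    obtain ⟨k, l, hkl, h2', h3⟩ := (key o2 o3).mp h23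
    have hjk : j = k := by
      by_contra hne
      rcases Nat.lt_or_ge j k with h | h
      · exact hdup o2 ((pair_sublist_iff _ _ τ).mp ⟨j, k, h, h2, h2'⟩)
      · have : k < j := by omega
        exact hdup o2 ((pair_sublist_iff _ _ τ).mp ⟨k, j, this, h2', h2⟩)
    exact (key o1 o3).mpr ⟨i, l, by omega, h1, h3⟩
  · intro o ho o' ho' hne
    obtain ⟨i, hi⟩ := List.mem_iff_getElem?.mp ho
    obtain ⟨j, hj⟩ := List.mem_iff_getElem?.mp ho'
    have hij : i ≠ j := by
      intro h; subst h; rw [hi] at hj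
      exact hne (by injection (Option.some.inj hj))
    rcases Nat.lt_or_ge i j with h | h
    · exact Or.inl ((key o o').mpr ⟨i, j, h, hi, hj⟩)
    · exact Or.inr ((key o' o).mpr ⟨j, i, by omega, hj, hi⟩)
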